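/- Let Z = Z^{BGW} be the formal power series determined by the Virasoro-type constraints (2k+1)!! ∂Z/∂t_k = L̂_k Z for all k ≥ 0, where L̂_m = (ħ/2) Σ_{i+j=m−1} (2i+1)!!(2j+1)!! ∂²/∂t_i∂t_j + Σ_{i≥0} ((2i+2m+1)!!/(2i−1)!!) t_i ∂/∂t_{i+m} + (1/8)δ_{m,0}. Then the restriction of log Z to t₁ = t₂ = ... = 0 satisfies log Z(t₀,0,0,...) = −(1/8)log(1−t₀); in particular ∂²_{t₀} log Z(t₀,0,0,...) = 1/(8(1−t₀)²). -/

import Mathlib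

open Finset

/-- Formal partial derivative `∂/∂t_k` on formal power series in the variables
`t₀, t₁, t₂, ...`. -/
noncomputable def pd (k : ℕ) (F : MvPowerSeries ℕ ℝ) : MvPowerSeries ℕ ℝ :=
  fun n => ((n k : ℝ) + 1) * F (n + Finsupp.single k 1)

/-- The (coefficientwise convergent) infinite sum
`Σ_{i≥0} ((2i+2m+1)!!/(2i−1)!!) t_i ∂/∂t_{i+m}` applied to `F`. -/
noncomputable def dilatationTerm (m : ℕ) (F : MvPowerSeries ℕ ℝ) :
    MvPowerSeries ℕ ℝ :=
  fun n => ∑ i ∈ n.support,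
    ((Nat.doubleFactorial (2 * i + 2 * m + 1) : ℝ) /
        (Nat.doubleFactorial (2 * i - 1) : ℝ)) *
      (MvPowerSeries.coeff n (MvPowerSeries.X i * pd (i + m) F))

/-- The operator
`L̂_m = (ħ/2) Σ_{i+j=m−1} (2i+1)!!(2j+1)!! ∂²/∂t_i∂t_j
  + Σ_{i≥0} ((2i+2m+1)!!/(2i−1)!!) t_i ∂/∂t_{i+m} + (1/8)δ_{m,0}`
(the first sum is empty for `m = 0`, and `(−1)!! = 1`). -/
noncomputable def Lhat (hbar : ℝ) (m : ℕ) (F : MvPowerSeries ℕ ℝ) :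
    MvPowerSeries ℕ ℝ :=
  (hbar / 2) •
      (if m = 0 then 0 else
        ∑ p ∈ Finset.HasAntidiagonal.antidiagonal (m - 1),
          ((Nat.doubleFactorial (2 * p.1 + 1) *
              Nat.doubleFactorial (2 * p.2 + 1) : ℕ) : ℝ) • pd p.1 (pd p.2 F))
    + dilatationTerm m F
    + (if m = 0 then ((1 : ℝ) / 8) • F else 0)

/-! The constraint for `k = 0` involves no second derivatives, and `L̂_0` acts diagonally on
monomials: on `t^n` it is multiplication by `∑ (2i+1) nᵢ + 1/8`. On the `t₀`-axis this says
`(n+1) c_{n+1} = (n + 1/8) c_n` for the coefficients `c_n` of `t₀ⁿ`, i.e. `(1 - t₀) f' = f / 8`,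
so `f = (1 - t₀)^{-1/8}`, whose Taylor series is the binomial series of exponent `-1/8`. -/

open MvPowerSeries

lemma coeff_pd (k : ℕ) (F : MvPowerSeries ℕ ℝ) (n : ℕ →₀ ℕ) :
    coeff n (pd k F) = ((n k : ℝ) + 1) * coeff (n + Finsupp.single k 1) F :=
  rfl

lemma coeff_X_mul_pd_self {i : ℕ} {n : ℕ →₀ ℕ} (hi : n i ≠ 0) (F : MvPowerSeries ℕ ℝ) :
    coeff n (X i * pd i F) = n i * coeff n F := by
  have hle : Finsupp.single i 1 ≤ n := Finsupp.single_le_iff.2 (Nat.one_le_iff_ne_zero.2 hi)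
  rw [X_def, coeff_monomial_mul, if_pos hle, one_mul, coeff_pd, tsub_add_cancel_of_le hle,
    Finsupp.tsub_apply, Finsupp.single_eq_same, Nat.cast_sub (Nat.one_le_iff_ne_zero.2 hi)]
  ring

lemma doubleFactorial_two_mul_add_one_div (i : ℕ) :
    ((2 * i + 1).doubleFactorial : ℝ) / (2 * i - 1).doubleFactorial = 2 * i + 1 := by
  rw [Nat.doubleFactorial_add_one]
  push_cast
  field_simp

lemma coeff_dilatationTerm_zero (F : MvPowerSeries ℕ ℝ) (n : ℕ →₀ ℕ) :
    coeff n (dilatationTerm 0 F) =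
      (∑ i ∈ n.support, (2 * (i : ℝ) + 1) * n i) * coeff n F := by
  rw [sum_mul]
  refine sum_congr rfl fun i hi => ?_
  rw [mul_zero, add_zero, add_zero, doubleFactorial_two_mul_add_one_div,
    coeff_X_mul_pd_self (Finsupp.mem_support_iff.1 hi)]
  ring

lemma coeff_Lhat_zero (hbar : ℝ) (F : MvPowerSeries ℕ ℝ) (n : ℕ →₀ ℕ) :
    coeff n (Lhat hbar 0 F) =
      (∑ i ∈ n.support, (2 * (i : ℝ) + 1) * n i + 1 / 8) * coeff n F := by
  simp only [Lhat, ↓reduceIte, smul_zero, zero_add, map_add, map_smul, smul_eq_mul,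
    coeff_dilatationTerm_zero]
  ring

lemma sum_support_single_zero_odd_mul (m : ℕ) :
    ∑ i ∈ (Finsupp.single (0 : ℕ) m).support, (2 * (i : ℝ) + 1) * Finsupp.single 0 m i = m := by
  rcases eq_or_ne m 0 with rfl | hm
  · simp
  · simp [Finsupp.support_single, hm]

lemma succ_mul_coeff_single_zero_succ {hbar : ℝ} {Z : MvPowerSeries ℕ ℝ}
    (h : pd 0 Z = Lhat hbar 0 Z) (m : ℕ) :
    ((m : ℝ) + 1) * coeff (Finsupp.single 0 (m + 1)) Z =
      (1 / 8 + m) * coeff (Finsupp.single 0 m) Z := by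
  have hm := congrArg (coeff (Finsupp.single 0 m)) h
  rw [coeff_pd, coeff_Lhat_zero, sum_support_single_zero_odd_mul, Finsupp.single_eq_same,
    ← Finsupp.single_add] at hm
  linear_combination hm

lemma eq_prod_div_factorial_of_succ_mul_eq {K : Type*} [Field K] [CharZero K] {a : K}
    {c : ℕ → K} (h0 : c 0 = 1) (hsucc : ∀ n : ℕ, ((n : K) + 1) * c (n + 1) = (a + n) * c n)
    (n : ℕ) :
    c n = (∏ j ∈ range n, (a + j)) / n.factorial := by
  induction n with
  | zero => simp [h0]
  | succ n ih =>
    have h := hsucc n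
    rw [ih] at h
    rw [prod_range_succ, Nat.factorial_succ, Nat.cast_mul, Nat.cast_succ]
    field_simp at h ⊢
    linear_combination h

lemma ascPochhammer_eval_eq_prod_range {S : Type*} [CommSemiring S] (n : ℕ) (a : S) :
    Polynomial.eval a (ascPochhammer S n) = ∏ j ∈ range n, (a + j) := by
  induction n with
  | zero => simp
  | succ n ih => rw [ascPochhammer_succ_eval, ih, prod_range_succ]

lemma Ring.choose_add_sub_one_eq_prod_div_factorial {K : Type*} [Field K] [CharZero K]
    (a : K) (n : ℕ) :
    Ring.choose (a + n - 1) n = (∏ j ∈ range n, (a + j)) / n.factorial := by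
  have h := Ring.factorial_nsmul_multichoose_eq_ascPochhammer a n
  rw [Polynomial.ascPochhammer_smeval_eq_eval, ascPochhammer_eval_eq_prod_range, nsmul_eq_mul,
    Ring.multichoose_eq] at h
  rw [← h, mul_div_cancel_left₀ _ (Nat.cast_ne_zero.2 n.factorial_ne_zero)]

lemma hasSum_prod_div_factorial_mul_pow (a : ℝ) {t : ℝ} (ht : |t| < 1) :
    HasSum (fun n => (∏ j ∈ range n, (a + j)) / n.factorial * t ^ n)
      (Real.exp (-a * Real.log (1 - t))) := by
  have hmem : t ∈ Metric.eball (0 : ℝ) 1 := by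
    rw [Metric.mem_eball, edist_dist, dist_zero_right, Real.norm_eq_abs]
    exact ENNReal.ofReal_lt_one.2 ht
  have h := (Real.one_div_one_sub_rpow_hasFPowerSeriesOnBall_zero a).hasSum hmem
  have hpos : 0 < 1 - t := by linarith [(abs_lt.1 ht).2]
  simp only [FormalMultilinearSeries.ofScalars_apply_eq,
    Ring.choose_add_sub_one_eq_prod_div_factorial, smul_eq_mul, zero_add] at h
  rwa [Real.rpow_def_of_pos hpos, one_div, ← Real.exp_neg, mul_comm, ← neg_mul] at h

/-- If the formal power series `Z` (normalised by `Z(0) = 1`) satisfies the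
Virasoro-type constraints `(2k+1)!! ∂Z/∂t_k = L̂_k Z` for all `k ≥ 0`, then its
restriction to `t₁ = t₂ = ⋯ = 0` is `(1−t₀)^{−1/8}`, i.e.
`log Z(t₀,0,0,…) = −(1/8) log(1−t₀)`: coefficientwise,
`coeff_{t₀ⁿ} Z = (∏_{j<n} (1/8 + j))/n!`, and for `|t₀| < 1` the restricted
series sums to `exp(−(1/8) log(1−t₀))`. -/
theorem stmt18 (hbar : ℝ) (Z : MvPowerSeries ℕ ℝ)
    (hnorm : MvPowerSeries.coeff 0 Z = 1)
    (hvir : ∀ k : ℕ,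
      ((Nat.doubleFactorial (2 * k + 1) : ℕ) : ℝ) • pd k Z = Lhat hbar k Z) :
    (∀ n : ℕ, MvPowerSeries.coeff (Finsupp.single 0 n) Z =
      (∏ j ∈ Finset.range n, ((1 : ℝ) / 8 + (j : ℝ))) / (Nat.factorial n : ℝ)) ∧
    ∀ t₀ : ℝ, |t₀| < 1 →
      HasSum (fun n : ℕ =>
          MvPowerSeries.coeff (Finsupp.single 0 n) Z * t₀ ^ n)
        (Real.exp (-(1 / 8) * Real.log (1 - t₀))) := by
  have hvir0 : pd 0 Z = Lhat hbar 0 Z := by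
    simpa only [Nat.doubleFactorial, Nat.cast_one, one_smul] using hvir 0
  have hcoeff : ∀ n : ℕ, coeff (Finsupp.single 0 n) Z =
      (∏ j ∈ range n, ((1 : ℝ) / 8 + j)) / n.factorial :=
    eq_prod_div_factorial_of_succ_mul_eq (by simpa only [Finsupp.single_zero] using hnorm)
      (succ_mul_coeff_single_zero_succ hvir0)
  refine ⟨hcoeff, fun t ht => ?_⟩
  simp_rw [hcoeff]
  exact hasSum_prod_div_factorial_mul_pow _ ht
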